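/- arXiv:1503.02500 — 4 statements merged into one kernel-verified Lean document; each statement's English description precedes it below -/
import Mathlib

section
/- Let f : ℝ → ℝ be twice differentiable on an open interval I with f, f', f'' integrable on [a,b] ⊆ I, a < b, and 0 ≤ λ ≤ 1. Define k(t) = t(t-λ)/2 for 0 ≤ t ≤ 1/2 and k(t) = (1-t)(1-λ-t)/2 for 1/2 ≤ t ≤ 1. Then (λ-1) f((a+b)/2) - λ (f(a)+f(b))/2 + (1/(b-a)) ∫_a^b f(x) dx = (b-a)² ∫_0^1 k(t) f''(ta + (1-t)b) dt. -/
/-!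
Substituting `g t = f (t * a + (1 - t) * b)` turns the claim into an identity on `[0, 1]`,
where `g'' t = (b - a) ^ 2 * f'' (t * a + (1 - t) * b)`. On each half of `[0, 1]` the kernel is a
quadratic with leading coefficient `1/2`, so integrating by parts twice there leaves `∫ g` plus
boundary terms. The `g' (1/2)` terms of the two halves cancel because `k` is continuous at `1/2`,
and the jump `1 - l` of `k'` at `1/2` produces the midpoint term.
-/

open intervalIntegral MeasureTheory Set

theorem IntervalIntegrable.comp_convexCombination {F : ℝ → ℝ} {a b : ℝ}
    (hF : IntervalIntegrable F volume a b) :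
    IntervalIntegrable (fun t => F (t * a + (1 - t) * b)) volume 0 1 := by
  rcases eq_or_ne a b with rfl | hab
  · simp only [← add_mul, add_sub_cancel, one_mul]
    exact intervalIntegrable_const
  have h := (hF.comp_add_right b).comp_mul_left (c := a - b)
  rw [div_self (sub_ne_zero.mpr hab), sub_self, zero_div] at h
  simp_rw [show ∀ t : ℝ, t * a + (1 - t) * b = (a - b) * t + b from fun t => by ring]
  exact h.symm

theorem integral_comp_convexCombination (F : ℝ → ℝ) {a b : ℝ} (hab : a ≠ b) :
    ∫ t in (0:ℝ)..1, F (t * a + (1 - t) * b) = (1 / (b - a)) * ∫ x in a..b, F x := by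
  have hc : a - b ≠ 0 := sub_ne_zero.mpr hab
  simp_rw [show ∀ t : ℝ, t * a + (1 - t) * b = (a - b) * t + b from fun t => by ring]
  rw [integral_comp_mul_add F hc, integral_symm, smul_eq_mul]
  simp only [mul_zero, zero_add, mul_one, sub_add_cancel]
  rw [one_div, ← neg_sub b a, inv_neg, neg_mul, mul_neg, neg_neg]

theorem integral_mul_deriv_deriv_of_deriv_deriv_eq_one {u u' g g' g'' : ℝ → ℝ} {α β : ℝ}
    (hu : ∀ x ∈ uIcc α β, HasDerivAt u (u' x) x)
    (hu' : ∀ x ∈ uIcc α β, HasDerivAt u' 1 x)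
    (hg : ∀ x ∈ uIcc α β, HasDerivAt g (g' x) x)
    (hg' : ∀ x ∈ uIcc α β, HasDerivAt g' (g'' x) x)
    (hg'' : IntervalIntegrable g'' volume α β) :
    ∫ x in α..β, u x * g'' x
      = u β * g' β - u α * g' α - (u' β * g β - u' α * g α) + ∫ x in α..β, g x := by
  have hu'_int : IntervalIntegrable u' volume α β :=
    ContinuousOn.intervalIntegrable fun x hx => (hu' x hx).continuousAt.continuousWithinAt
  have hg'_int : IntervalIntegrable g' volume α β :=
    ContinuousOn.intervalIntegrable fun x hx => (hg' x hx).continuousAt.continuousWithinAt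
  rw [integral_mul_deriv_eq_deriv_mul hu hg' hu'_int hg'',
    integral_mul_deriv_eq_deriv_mul hu' hg intervalIntegrable_const hg'_int]
  simp only [one_mul]
  ring

theorem integral_kernel_mul_deriv_deriv {k g g' g'' : ℝ → ℝ} (l : ℝ)
    (hk : ∀ t ∈ Icc (0:ℝ) 1, k t = if t ≤ 1/2 then t*(t-l)/2 else (1-t)*(1-l-t)/2)
    (hg : ∀ t ∈ Icc (0:ℝ) 1, HasDerivAt g (g' t) t)
    (hg' : ∀ t ∈ Icc (0:ℝ) 1, HasDerivAt g' (g'' t) t)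
    (hg'' : IntervalIntegrable g'' volume 0 1) :
    ∫ t in (0:ℝ)..1, k t * g'' t
      = (l - 1) * g (1/2) - l * (g 0 + g 1) / 2 + ∫ t in (0:ℝ)..1, g t := by
  have hL : uIcc (0:ℝ) (1/2) ⊆ uIcc 0 1 := uIcc_subset_uIcc_left (by norm_num)
  have hR : uIcc (1/2:ℝ) 1 ⊆ uIcc 0 1 := uIcc_subset_uIcc_right (by norm_num)
  rw [← uIcc_of_le zero_le_one] at hk hg hg'
  have hkL : EqOn k (fun t => t*(t-l)/2) (uIcc 0 (1/2)) := fun t ht => by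
    rw [hk t (hL ht), if_pos (uIcc_of_le (by norm_num : (0:ℝ) ≤ 1/2) ▸ ht).2]
  have hkR : EqOn k (fun t => (1-t)*(1-l-t)/2) (uIcc (1/2) 1) := fun t ht => by
    rw [hk t (hR ht)]
    rw [uIcc_of_le (by norm_num : (1/2:ℝ) ≤ 1)] at ht
    split_ifs with h
    · rw [le_antisymm h ht.1]; ring
    · rfl
  have hkg''L : IntervalIntegrable (fun t => k t * g'' t) volume 0 (1/2) :=
    (hg''.mono_set hL).continuousOn_mul (ContinuousOn.congr (by fun_prop) hkL)
  have hkg''R : IntervalIntegrable (fun t => k t * g'' t) volume (1/2) 1 :=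
    (hg''.mono_set hR).continuousOn_mul (ContinuousOn.congr (by fun_prop) hkR)
  have hg_int : IntervalIntegrable g volume 0 1 :=
    ContinuousOn.intervalIntegrable fun t ht => (hg t ht).continuousAt.continuousWithinAt
  have ibpL := integral_mul_deriv_deriv_of_deriv_deriv_eq_one
    (u := fun t => t*(t-l)/2) (u' := fun t => t - l/2)
    (fun t _ => ((hasDerivAt_id' t).mul ((hasDerivAt_id' t).sub_const l)).div_const 2
      |>.congr_deriv (by ring))
    (fun t _ => (hasDerivAt_id' t).sub_const (l/2))
    (fun t ht => hg t (hL ht)) (fun t ht => hg' t (hL ht)) (hg''.mono_set hL)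
  have ibpR := integral_mul_deriv_deriv_of_deriv_deriv_eq_one
    (u := fun t => (1-t)*(1-l-t)/2) (u' := fun t => t - 1 + l/2)
    (fun t _ => (((hasDerivAt_id' t).const_sub 1).mul
      ((hasDerivAt_id' t).const_sub (1-l))).div_const 2 |>.congr_deriv (by ring))
    (fun t _ => ((hasDerivAt_id' t).sub_const 1).add_const (l/2))
    (fun t ht => hg t (hR ht)) (fun t ht => hg' t (hR ht)) (hg''.mono_set hR)
  calc ∫ t in (0:ℝ)..1, k t * g'' t
      = (∫ t in (0:ℝ)..1/2, t*(t-l)/2 * g'' t)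
          + ∫ t in (1/2:ℝ)..1, (1-t)*(1-l-t)/2 * g'' t := by
        rw [← integral_add_adjacent_intervals hkg''L hkg''R,
          integral_congr fun t ht => congrArg (· * g'' t) (hkL ht),
          integral_congr fun t ht => congrArg (· * g'' t) (hkR ht)]
    _ = (l - 1) * g (1/2) - l * (g 0 + g 1) / 2 + ∫ t in (0:ℝ)..1, g t := by
        rw [ibpL, ibpR, ← integral_add_adjacent_intervals (hg_int.mono_set hL)
          (hg_int.mono_set hR)]
        ring

theorem stmt_1_general (f f' f'' : ℝ → ℝ) (I : Set ℝ) (a b : ℝ) (hab : a < b)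
    (hsub : Set.Icc a b ⊆ I)
    (hdf : ∀ x ∈ I, HasDerivAt f (f' x) x)
    (hdf2 : ∀ x ∈ I, HasDerivAt f' (f'' x) x)
    (hf2i : IntervalIntegrable f'' MeasureTheory.volume a b)
    (l : ℝ)
    (k : ℝ → ℝ)
    (hk : ∀ t ∈ Set.Icc (0:ℝ) 1,
      k t = if t ≤ 1/2 then t*(t-l)/2 else (1-t)*(1-l-t)/2) :
    (l-1) * f ((a+b)/2) - l * (f a + f b)/2 + (1/(b-a)) * ∫ x in a..b, f x
    = (b-a)^2 * ∫ t in (0:ℝ)..1, k t * f'' (t*a + (1-t)*b) := by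
  have hφ : ∀ t, HasDerivAt (fun t => t * a + (1 - t) * b) (a - b) t := fun t =>
    ((hasDerivAt_id' t).mul_const a).add (((hasDerivAt_id' t).const_sub 1).mul_const b)
      |>.congr_deriv (by ring)
  have hφI : ∀ t ∈ Icc (0:ℝ) 1, t * a + (1 - t) * b ∈ I := fun t ⟨h₀, h₁⟩ =>
    hsub ⟨by nlinarith, by nlinarith⟩
  have key := integral_kernel_mul_deriv_deriv l hk (g := fun t => f (t * a + (1 - t) * b))
    (g' := fun t => f' (t * a + (1 - t) * b) * (a - b))
    (g'' := fun t => (b - a) ^ 2 * f'' (t * a + (1 - t) * b))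
    (fun t ht => (hdf _ (hφI t ht)).comp t (hφ t))
    (fun t ht => ((hdf2 _ (hφI t ht)).comp t (hφ t)).mul_const (a - b) |>.congr_deriv (by ring))
    (hf2i.comp_convexCombination.const_mul _)
  rw [integral_comp_convexCombination f hab.ne,
    show (1/2 : ℝ) * a + (1 - 1/2) * b = (a + b) / 2 by ring] at key
  simp only [zero_mul, one_mul, sub_zero, sub_self, zero_add, add_zero] at key
  rw [add_comm (f a), ← key, ← intervalIntegral.integral_const_mul]
  simp_rw [mul_left_comm]

theorem stmt_1 (f f' f'' : ℝ → ℝ) (I : Set ℝ) (hI : IsOpen I) (a b : ℝ) (hab : a < b)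
    (hsub : Set.Icc a b ⊆ I)
    (hdf : ∀ x ∈ I, HasDerivAt f (f' x) x)
    (hdf2 : ∀ x ∈ I, HasDerivAt f' (f'' x) x)
    (hfi : IntervalIntegrable f MeasureTheory.volume a b)
    (hf1i : IntervalIntegrable f' MeasureTheory.volume a b)
    (hf2i : IntervalIntegrable f'' MeasureTheory.volume a b)
    (l : ℝ) (hl : l ∈ Set.Icc (0:ℝ) 1)
    (k : ℝ → ℝ)
    (hk : ∀ t ∈ Set.Icc (0:ℝ) 1,
      k t = if t ≤ 1/2 then t*(t-l)/2 else (1-t)*(1-l-t)/2) :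
    (l-1) * f ((a+b)/2) - l * (f a + f b)/2 + (1/(b-a)) * ∫ x in a..b, f x
    = (b-a)^2 * ∫ t in (0:ℝ)..1, k t * f'' (t*a + (1-t)*b) :=
  stmt_1_general f f' f'' I a b hab hsub hdf hdf2 hf2i l k hk
end

section
/- Let f : ℝ → ℝ be twice differentiable on an open interval containing [a,b], a < b, with f, f', f'' integrable, and let p, q > 1 with 1/p + 1/q = 1. If |f''|^q is convex on [a,b], then |f((a+b)/2) - (1/(b-a))∫_a^b f(x)dx| ≤ (b-a)² (1/(2^{2p+1}(p+1)))^{1/p} { [ |f''(b)|^q/(2^{q+2}(q+2)) + B(1/2; q+1,2)|f''(a)|^q ]^{1/q} + [ B(1/2; q+1,2)|f''(b)|^q + |f''(a)|^q/(2^{q+2}(q+2)) ]^{1/q} }, where B(x; s, t) is the incomplete Beta function. -/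
/-!
Integrating by parts twice against the Peano kernels `(x - a)²` on `[a, m]` and `(x - b)²` on
`[m, b]`, `m = (a + b) / 2`, writes `f m - (b - a)⁻¹ ∫ f` as `-(2 (b - a))⁻¹` times the sum of
the two kernel integrals of `f''`; the reflection `x ↦ a + b - x` moves the second one to
`[a, m]` as well. Each kernel integral is bounded by Hölder's inequality applied to
`(x - a) · ((x - a) |f''|)`, and convexity bounds `|f''|^q` by its chord. After the substitution
`x = a + (b - a) t`, integrating `t^q` against the chord over `[0, 1/2]` yields the incomplete
Beta value `B(1/2; q + 1, 2)` and `∫ t^(q+1) = 1 / (2^(q+2) (q+2))`.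
-/

open Real MeasureTheory intervalIntegral Set

theorem ConvexOn.le_chord {f : ℝ → ℝ} {a b x : ℝ} (hf : ConvexOn ℝ (Icc a b) f) (hab : a < b)
    (hx : x ∈ Icc a b) : f x ≤ (b - x) / (b - a) * f a + (x - a) / (b - a) * f b := by
  have hba : 0 < b - a := sub_pos.2 hab
  have key := hf.2 (left_mem_Icc.2 hab.le) (right_mem_Icc.2 hab.le)
    (div_nonneg (sub_nonneg.2 hx.2) hba.le) (div_nonneg (sub_nonneg.2 hx.1) hba.le)
    (by field_simp; ring)
  have hx' : (b - x) / (b - a) * a + (x - a) / (b - a) * b = x := by field_simp; ring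
  simpa only [smul_eq_mul, hx'] using key

theorem IntervalIntegrable.comp_reflect {g : ℝ → ℝ} {a b : ℝ}
    (hg : IntervalIntegrable g volume a b) :
    IntervalIntegrable (fun x => g (a + b - x)) volume a b := by
  simpa only [add_sub_cancel_right, add_sub_cancel_left] using (hg.comp_sub_left (a + b)).symm

theorem integral_sub_sq_mul_of_hasDerivAt {f f' f'' : ℝ → ℝ} {a c : ℝ}
    (hf : ∀ x ∈ uIcc a c, HasDerivAt f (f' x) x) (hf' : ∀ x ∈ uIcc a c, HasDerivAt f' (f'' x) x)
    (hf''i : IntervalIntegrable f'' volume a c) :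
    ∫ x in a..c, (x - a) ^ 2 * f'' x =
      (c - a) ^ 2 * f' c - 2 * (c - a) * f c + 2 * ∫ x in a..c, f x := by
  have hfi : IntervalIntegrable f volume a c := (HasDerivAt.continuousOn hf).intervalIntegrable
  have hki : IntervalIntegrable (fun x => (x - a) ^ 2 * f'' x) volume a c :=
    hf''i.continuousOn_mul (by fun_prop)
  have hderiv : ∀ x ∈ uIcc a c, HasDerivAt (fun x => (x - a) ^ 2 * f' x - 2 * (x - a) * f x)
      ((x - a) ^ 2 * f'' x - 2 * f x) x := by
    intro x hx
    have hsq := ((hasDerivAt_id x).sub_const a).fun_pow 2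
    have hlin := ((hasDerivAt_id x).sub_const a).const_mul 2
    refine ((hsq.mul (hf' x hx)).sub (hlin.mul (hf x hx))).congr_deriv ?_
    simp only [Nat.cast_ofNat, id_eq, Nat.add_one_sub_one, pow_one, mul_one]
    ring
  have hftc := integral_eq_sub_of_hasDerivAt hderiv (hki.sub (hfi.const_mul 2))
  rw [integral_sub hki (hfi.const_mul 2), intervalIntegral.integral_const_mul] at hftc
  simp only [sub_self, ne_eq, OfNat.ofNat_ne_zero, not_false_eq_true, zero_pow, zero_mul,
    mul_zero, sub_zero] at hftc
  linarith

theorem midpoint_sub_average_eq {f f' f'' : ℝ → ℝ} {a b : ℝ} (hab : a < b)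
    (hf : ∀ x ∈ Icc a b, HasDerivAt f (f' x) x) (hf' : ∀ x ∈ Icc a b, HasDerivAt f' (f'' x) x)
    (hf''i : IntervalIntegrable f'' volume a b) :
    f ((a + b) / 2) - 1 / (b - a) * ∫ x in a..b, f x =
      -(1 / (2 * (b - a))) * ((∫ x in a..(a + b) / 2, (x - a) ^ 2 * f'' x) +
        ∫ x in a..(a + b) / 2, (x - a) ^ 2 * f'' (a + b - x)) := by
  set m := (a + b) / 2 with hm
  have hmab : m ∈ uIcc a b := by rw [uIcc_of_le hab.le]; constructor <;> linarith
  have hsub : uIcc a m ⊆ uIcc a b := uIcc_subset_uIcc_left hmab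
  have hmem : ∀ x ∈ uIcc a m, x ∈ Icc a b := fun x hx => uIcc_of_le hab.le ▸ hsub hx
  have hrefl : ∀ x ∈ uIcc a m, a + b - x ∈ Icc a b := by
    intro x hx
    obtain ⟨h1, h2⟩ := hmem x hx
    constructor <;> linarith
  have hleft := integral_sub_sq_mul_of_hasDerivAt (fun x hx => hf x (hmem x hx))
    (fun x hx => hf' x (hmem x hx)) (hf''i.mono_set hsub)
  have hright := integral_sub_sq_mul_of_hasDerivAt (f := fun x => f (a + b - x))
    (f' := fun x => -f' (a + b - x)) (f'' := fun x => f'' (a + b - x))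
    (fun x hx => (hf _ (hrefl x hx)).comp_const_sub (a + b) x)
    (fun x hx => by simpa using ((hf' _ (hrefl x hx)).comp_const_sub (a + b) x).fun_neg)
    (hf''i.comp_reflect.mono_set hsub)
  have hfi : IntervalIntegrable f volume a b :=
    (HasDerivAt.continuousOn fun x hx => hf x (uIcc_of_le hab.le ▸ hx)).intervalIntegrable
  have hmm : a + b - m = m := by rw [hm]; ring
  have hsplit : (∫ x in a..m, f x) + ∫ x in a..m, f (a + b - x) = ∫ x in a..b, f x := by
    rw [intervalIntegral.integral_comp_sub_left, add_sub_cancel_left, hmm]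
    exact integral_add_adjacent_intervals (hfi.mono_set hsub)
      (hfi.mono_set (uIcc_subset_uIcc_right hmab))
  have hma : m - a = (b - a) / 2 := by rw [hm]; ring
  simp only [hmm] at hright
  rw [hleft, hright, ← hsplit, hma]
  have hba : b - a ≠ 0 := by linarith
  field_simp
  ring

theorem intervalIntegral.integral_mul_le_Lp_mul_Lq_of_nonneg {p q : ℝ} (hpq : p.HolderConjugate q)
    {a c : ℝ} (hac : a ≤ c) {u v : ℝ → ℝ}
    (hu : AEStronglyMeasurable u (volume.restrict (Ioc a c)))
    (hv : AEStronglyMeasurable v (volume.restrict (Ioc a c)))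
    (hu0 : ∀ x ∈ Ioc a c, 0 ≤ u x) (hv0 : ∀ x ∈ Ioc a c, 0 ≤ v x)
    (hup : IntervalIntegrable (fun x => u x ^ p) volume a c)
    (hvq : IntervalIntegrable (fun x => v x ^ q) volume a c) :
    ∫ x in a..c, u x * v x ≤
      (∫ x in a..c, u x ^ p) ^ (1 / p) * (∫ x in a..c, v x ^ q) ^ (1 / q) := by
  have nonneg {w : ℝ → ℝ} (hw0 : ∀ x ∈ Ioc a c, 0 ≤ w x) :
      0 ≤ᵐ[volume.restrict (Ioc a c)] w := by
    filter_upwards [ae_restrict_mem measurableSet_Ioc] with x hx using hw0 x hx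
  have memLp {r : ℝ} {w : ℝ → ℝ} (hr : 0 < r)
      (hw : AEStronglyMeasurable w (volume.restrict (Ioc a c)))
      (hw0 : ∀ x ∈ Ioc a c, 0 ≤ w x) (hwr : IntervalIntegrable (fun x => w x ^ r) volume a c) :
      MemLp w (ENNReal.ofReal r) (volume.restrict (Ioc a c)) := by
    refine (integrable_norm_rpow_iff hw (by simpa using hr) ENNReal.ofReal_ne_top).1 ?_
    rw [ENNReal.toReal_ofReal hr.le]
    refine hwr.1.congr ?_
    filter_upwards [ae_restrict_mem measurableSet_Ioc] with x hx
    rw [Real.norm_of_nonneg (hw0 x hx)]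
  simp only [integral_of_le hac]
  exact MeasureTheory.integral_mul_le_Lp_mul_Lq_of_nonneg hpq (nonneg hu0) (nonneg hv0)
    (memLp hpq.pos hu hu0 hup) (memLp hpq.symm.pos hv hv0 hvq)

theorem integral_sub_rpow {r : ℝ} (hr : -1 < r) (a c : ℝ) :
    ∫ x in a..c, (x - a) ^ r = (c - a) ^ (r + 1) / (r + 1) := by
  rw [integral_comp_sub_right (fun x => x ^ r), sub_self, integral_rpow (Or.inl hr),
    zero_rpow (by linarith), sub_zero]

theorem integral_rpow_mul_chord {q : ℝ} (hq : 0 < q) {a b : ℝ} (hab : a < b) (A B : ℝ) :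
    ∫ x in a..(a + b) / 2, (x - a) ^ q * ((b - x) / (b - a) * A + (x - a) / (b - a) * B) =
      (b - a) ^ (q + 1) *
        (B / (2 ^ (q + 2) * (q + 2)) + (∫ t in (0:ℝ)..1/2, t ^ q * (1 - t)) * A) := by
  have hba : 0 < b - a := sub_pos.2 hab
  have hsubst := smul_integral_comp_add_mul (a := 0) (b := 1/2)
    (fun x => (x - a) ^ q * ((b - x) / (b - a) * A + (x - a) / (b - a) * B)) (b - a) a
  rw [mul_zero, add_zero, show a + (b - a) * (1 / 2) = (a + b) / 2 by ring] at hsubst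
  rw [← hsubst, smul_eq_mul]
  have hpt : EqOn (fun t => (a + (b - a) * t - a) ^ q *
        ((b - (a + (b - a) * t)) / (b - a) * A + (a + (b - a) * t - a) / (b - a) * B))
      (fun t => (b - a) ^ q * (A * (t ^ q * (1 - t)) + B * t ^ (q + 1))) (uIcc 0 (1 / 2)) := by
    intro t ht
    have ht0 : 0 ≤ t := by rw [uIcc_of_le (by norm_num)] at ht; exact ht.1
    simp only [add_sub_cancel_left]
    rw [mul_rpow hba.le ht0, rpow_add_one' ht0 (by linarith)]
    field_simp
    ring
  have hI1 : IntervalIntegrable (fun t : ℝ => t ^ q * (1 - t)) volume 0 (1 / 2) :=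
    ((continuous_id.rpow_const fun _ => Or.inr hq.le).mul (by fun_prop)).intervalIntegrable _ _
  have hI2 : IntervalIntegrable (fun t : ℝ => t ^ (q + 1)) volume 0 (1 / 2) :=
    intervalIntegrable_rpow' (by linarith)
  rw [integral_congr hpt, intervalIntegral.integral_const_mul,
    integral_add (hI1.const_mul A) (hI2.const_mul B), intervalIntegral.integral_const_mul,
    intervalIntegral.integral_const_mul, integral_rpow (Or.inl (by linarith)),
    zero_rpow (by linarith), show q + 1 + 1 = q + 2 by ring, div_rpow (by norm_num) (by norm_num),
    one_rpow, rpow_add_one hba.ne']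
  field_simp
  ring

theorem rpow_add_one_rpow_one_div {x r : ℝ} (hx : 0 ≤ x) (hr : 0 < r) :
    (x ^ (r + 1)) ^ (1 / r) = x * x ^ (1 / r) := by
  rw [← rpow_mul hx, show (r + 1) * (1 / r) = 1 + 1 / r by field_simp,
    rpow_add' hx (by positivity), rpow_one]

theorem holder_coeff_eq {h p q C : ℝ} (hh : 0 < h) (hpq : p.HolderConjugate q) (hC : 0 ≤ C) :
    ((h / 2) ^ (p + 1) / (p + 1)) ^ (1 / p) * (h ^ (q + 1) * C) ^ (1 / q) =
      2 * h ^ 3 * (1 / (2 ^ (2 * p + 1) * (p + 1))) ^ (1 / p) * C ^ (1 / q) := by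
  have hp := hpq.pos
  have hq := hpq.symm.pos
  have hst : 1 / p + 1 / q = 1 := by simpa only [one_div] using hpq.inv_add_inv_eq_one
  have hhh : h ^ (1 / p) * h ^ (1 / q) = h := by rw [← rpow_add hh, hst, rpow_one]
  have h2 : (2 : ℝ) ^ ((2 * p + 1) * (1 / p)) = 4 * 2 ^ (1 / p) := by
    rw [show (2 * p + 1) * (1 / p) = 2 + 1 / p by field_simp, rpow_add two_pos]
    norm_num
  rw [div_rpow (by positivity) (by positivity), rpow_add_one_rpow_one_div (by positivity) hp,
    mul_rpow (by positivity) hC, rpow_add_one_rpow_one_div hh.le hq, div_rpow hh.le two_pos.le,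
    div_rpow zero_le_one (by positivity), one_rpow, mul_rpow (by positivity) (by positivity),
    ← rpow_mul two_pos.le, h2]
  field_simp
  linear_combination (4 * C ^ (1 / q)) * hhh

theorem integral_rpow_mul_one_sub_nonneg (q : ℝ) : 0 ≤ ∫ t in (0:ℝ)..1/2, t ^ q * (1 - t) :=
  integral_nonneg (by norm_num) fun t ht => mul_nonneg (rpow_nonneg ht.1 q) (by linarith [ht.2])

theorem abs_integral_sub_sq_mul_le {p q : ℝ} (hpq : p.HolderConjugate q) {a b : ℝ} (hab : a < b)
    {g : ℝ → ℝ} (hg : IntervalIntegrable g volume a ((a + b) / 2)) {A B : ℝ} (hA : 0 ≤ A)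
    (hB : 0 ≤ B)
    (hgq : ∀ x ∈ Icc a ((a + b) / 2), |g x| ^ q ≤ (b - x) / (b - a) * A + (x - a) / (b - a) * B) :
    |∫ x in a..(a + b) / 2, (x - a) ^ 2 * g x| ≤
      2 * (b - a) ^ 3 * (1 / (2 ^ (2 * p + 1) * (p + 1))) ^ (1 / p) *
        (B / (2 ^ (q + 2) * (q + 2)) + (∫ t in (0:ℝ)..1/2, t ^ q * (1 - t)) * A) ^ (1 / q) := by
  set m := (a + b) / 2 with hm
  have ham : a ≤ m := by linarith
  have hp := hpq.pos
  have hq := hpq.symm.pos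
  have hu : Continuous fun x : ℝ => x - a := by fun_prop
  have hv : AEStronglyMeasurable (fun x => (x - a) * |g x|) (volume.restrict (Ioc a m)) :=
    hu.aestronglyMeasurable.mul hg.1.aestronglyMeasurable.norm
  have hchord : IntervalIntegrable
      (fun x => (x - a) ^ q * ((b - x) / (b - a) * A + (x - a) / (b - a) * B)) volume a m :=
    ((hu.rpow_const fun _ => Or.inr hq.le).mul (by fun_prop)).intervalIntegrable _ _
  have hvq_le : ∀ x ∈ Icc a m, ((x - a) * |g x|) ^ q ≤
      (x - a) ^ q * ((b - x) / (b - a) * A + (x - a) / (b - a) * B) := fun x hx => by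
    rw [mul_rpow (sub_nonneg.2 hx.1) (abs_nonneg _)]
    exact mul_le_mul_of_nonneg_left (hgq x hx) (rpow_nonneg (sub_nonneg.2 hx.1) _)
  have hvq : IntervalIntegrable (fun x => ((x - a) * |g x|) ^ q) volume a m := by
    refine hchord.mono_fun' ?_ ?_
    · rw [uIoc_of_le ham]
      exact (continuous_id.rpow_const fun _ => Or.inr hq.le).comp_aestronglyMeasurable hv
    · rw [uIoc_of_le ham]
      filter_upwards [ae_restrict_mem measurableSet_Ioc] with x hx
      have hxa : 0 ≤ x - a := sub_nonneg.2 hx.1.le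
      rw [Real.norm_of_nonneg (rpow_nonneg (mul_nonneg hxa (abs_nonneg _)) _)]
      exact hvq_le x (Ioc_subset_Icc_self hx)
  calc |∫ x in a..m, (x - a) ^ 2 * g x|
      ≤ ∫ x in a..m, (x - a) * ((x - a) * |g x|) := by
        refine (abs_integral_le_integral_abs ham).trans_eq (integral_congr fun x _ => ?_)
        simp only [abs_mul, abs_pow, sq_abs]
        ring
    _ ≤ (∫ x in a..m, (x - a) ^ p) ^ (1 / p) * (∫ x in a..m, ((x - a) * |g x|) ^ q) ^ (1 / q) :=
        integral_mul_le_Lp_mul_Lq_of_nonneg hpq ham hu.aestronglyMeasurable hv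
          (fun x hx => sub_nonneg.2 hx.1.le)
          (fun x hx => mul_nonneg (sub_nonneg.2 hx.1.le) (abs_nonneg _))
          ((hu.rpow_const fun _ => Or.inr hp.le).intervalIntegrable _ _) hvq
    _ ≤ (∫ x in a..m, (x - a) ^ p) ^ (1 / p) *
          (∫ x in a..m, (x - a) ^ q * ((b - x) / (b - a) * A + (x - a) / (b - a) * B)) ^ (1 / q) := by
        gcongr
        · exact rpow_nonneg (integral_nonneg ham fun x hx => rpow_nonneg (sub_nonneg.2 hx.1) _) _
        · exact integral_nonneg ham fun x hx =>
            rpow_nonneg (mul_nonneg (sub_nonneg.2 hx.1) (abs_nonneg _)) _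
        · exact integral_mono_on ham hvq hchord hvq_le
    _ = _ := by
        rw [integral_sub_rpow (by linarith), integral_rpow_mul_chord hq hab,
          show m - a = (b - a) / 2 by rw [hm]; ring, holder_coeff_eq (sub_pos.2 hab) hpq]
        exact add_nonneg (div_nonneg hB (by positivity))
          (mul_nonneg (integral_rpow_mul_one_sub_nonneg q) hA)

theorem stmt_14_general (f f' f'' : ℝ → ℝ) (I : Set ℝ) (a b : ℝ) (hab : a < b)
    (hsub : Set.Icc a b ⊆ I)
    (hdf : ∀ x ∈ I, HasDerivAt f (f' x) x)
    (hdf2 : ∀ x ∈ I, HasDerivAt f' (f'' x) x)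
    (hf2i : IntervalIntegrable f'' MeasureTheory.volume a b)
    (p q : ℝ) (hp : 1 < p) (hpq : 1/p + 1/q = 1)
    (hconv : ConvexOn ℝ (Set.Icc a b) (fun x => |f'' x| ^ q)) :
    |f ((a+b)/2) - (1/(b-a)) * ∫ x in a..b, f x|
    ≤ (b-a)^2 * (1 / (2 ^ (2*p+1) * (p+1))) ^ (1/p) *
      (((|f'' b| ^ q) / (2 ^ (q+2) * (q+2))
        + (∫ u in (0:ℝ)..(1/2), u ^ q * (1-u)) * |f'' a| ^ q) ^ (1/q)
      + ((∫ u in (0:ℝ)..(1/2), u ^ q * (1-u)) * |f'' b| ^ q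
        + (|f'' a| ^ q) / (2 ^ (q+2) * (q+2))) ^ (1/q)) := by
  have hholder : p.HolderConjugate q :=
    Real.holderConjugate_iff.2 ⟨hp, by simpa only [one_div] using hpq⟩
  have hm : (a + b) / 2 ∈ uIcc a b := by rw [uIcc_of_le hab.le]; constructor <;> linarith
  have hleft := abs_integral_sub_sq_mul_le hholder hab (hf2i.mono_set (uIcc_subset_uIcc_left hm))
    (by positivity) (by positivity) fun x hx => hconv.le_chord hab ⟨hx.1, by linarith [hx.2]⟩
  have hright := abs_integral_sub_sq_mul_le hholder hab
    (hf2i.comp_reflect.mono_set (uIcc_subset_uIcc_left hm)) (A := |f'' b| ^ q) (B := |f'' a| ^ q)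
    (by positivity) (by positivity)
    fun x hx => (hconv.le_chord hab ⟨by linarith [hx.2], by linarith [hx.1]⟩).trans_eq (by ring)
  rw [add_comm (|f'' a| ^ q / _)] at hright
  rw [midpoint_sub_average_eq hab (fun x hx => hdf x (hsub hx)) (fun x hx => hdf2 x (hsub hx))
    hf2i, abs_mul, abs_neg, abs_of_pos (by positivity)]
  refine (mul_le_mul_of_nonneg_left ((abs_add_le _ _).trans (add_le_add hleft hright))
    (by positivity)).trans_eq ?_
  field_simp

theorem stmt_14 (f f' f'' : ℝ → ℝ) (I : Set ℝ) (hI : IsOpen I) (a b : ℝ) (hab : a < b)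
    (hsub : Set.Icc a b ⊆ I)
    (hdf : ∀ x ∈ I, HasDerivAt f (f' x) x)
    (hdf2 : ∀ x ∈ I, HasDerivAt f' (f'' x) x)
    (hfi : IntervalIntegrable f MeasureTheory.volume a b)
    (hf1i : IntervalIntegrable f' MeasureTheory.volume a b)
    (hf2i : IntervalIntegrable f'' MeasureTheory.volume a b)
    (p q : ℝ) (hp : 1 < p) (hq : 1 < q) (hpq : 1/p + 1/q = 1)
    (hconv : ConvexOn ℝ (Set.Icc a b) (fun x => |f'' x| ^ q)) :
    |f ((a+b)/2) - (1/(b-a)) * ∫ x in a..b, f x|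
    ≤ (b-a)^2 * (1 / (2 ^ (2*p+1) * (p+1))) ^ (1/p) *
      (((|f'' b| ^ q) / (2 ^ (q+2) * (q+2))
        + (∫ u in (0:ℝ)..(1/2), u ^ q * (1-u)) * |f'' a| ^ q) ^ (1/q)
      + ((∫ u in (0:ℝ)..(1/2), u ^ q * (1-u)) * |f'' b| ^ q
        + (|f'' a| ^ q) / (2 ^ (q+2) * (q+2))) ^ (1/q)) :=
  stmt_14_general f f' f'' I a b hab hsub hdf hdf2 hf2i p q hp hpq hconv
end

section
/- Let f : ℝ → ℝ be twice differentiable on an open interval containing [a,b], a < b, with f, f', f'' integrable, and let p, q > 1 with 1/p + 1/q = 1. If |f''|^q is convex on [a,b], then |(f(a)+f(b))/2 - (1/(b-a))∫_a^b f(x)dx| ≤ (b-a)² ((2^{p+1}-1)/(2^{2p+1}(p+1)))^{1/p} { [ |f''(b)|^q/(2^{q+2}(q+2)) + B(1/2; q+1,2)|f''(a)|^q ]^{1/q} + [ B(1/2; q+1,2)|f''(b)|^q + |f''(a)|^q/(2^{q+2}(q+2)) ]^{1/q} }. -/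
/-!
Two integrations by parts turn the trapezoid error into
`(1 / (2 (b - a))) ∫ₐᵇ (x - a) (b - x) f''(x) dx`. Split `[a, b]` at the midpoint `m`; the
reflection `x ↦ a + b - x` turns the right half into a left half for `f''(a + b - ·)`, whose
`|·| ^ q` is again convex, with the roles of `f''(a)` and `f''(b)` exchanged. On `[a, m]`, Hölder's
inequality splits the integrand as `(b - x) · ((x - a) |f''(x)|)`. The first factor integrates
explicitly; in the second, convexity bounds `|f''(x)| ^ q` by its chord
`((b - x) |f''(a)| ^ q + (x - a) |f''(b)| ^ q) / (b - a)`, and the substitution `x = a + (b - a) u`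
produces the incomplete beta value `∫₀^{1/2} u ^ q (1 - u) du`.
-/

open MeasureTheory Set

theorem MeasureTheory.MemLp.of_integrable_rpow {α : Type*} [MeasurableSpace α] {μ : Measure α}
    {p : ℝ} (hp : 0 < p) {F : α → ℝ} (hF : AEStronglyMeasurable F μ) (hF0 : 0 ≤ᵐ[μ] F)
    (hFp : Integrable (fun x => F x ^ p) μ) : MemLp F (ENNReal.ofReal p) μ := by
  refine (integrable_norm_rpow_iff hF (by simpa using hp) ENNReal.ofReal_ne_top).1 ?_
  rw [ENNReal.toReal_ofReal hp.le]
  exact hFp.congr (hF0.mono fun x hx => by simp only [Real.norm_of_nonneg hx])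

theorem MeasureTheory.integral_mul_le_Lp_mul_Lq_of_integrable_rpow {α : Type*}
    [MeasurableSpace α] {μ : Measure α} {p q : ℝ} (hpq : p.HolderConjugate q) {F G : α → ℝ}
    (hF : AEStronglyMeasurable F μ) (hG : AEStronglyMeasurable G μ)
    (hF0 : 0 ≤ᵐ[μ] F) (hG0 : 0 ≤ᵐ[μ] G)
    (hFp : Integrable (fun x => F x ^ p) μ) (hGq : Integrable (fun x => G x ^ q) μ) :
    ∫ x, F x * G x ∂μ ≤ (∫ x, F x ^ p ∂μ) ^ (1 / p) * (∫ x, G x ^ q ∂μ) ^ (1 / q) :=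
  integral_mul_le_Lp_mul_Lq_of_nonneg hpq hF0 hG0 (.of_integrable_rpow hpq.pos hF hF0 hFp)
    (.of_integrable_rpow hpq.symm.pos hG hG0 hGq)

theorem ConvexOn.comp_reflect_Icc {f : ℝ → ℝ} {a b : ℝ} (hf : ConvexOn ℝ (Icc a b) f) :
    ConvexOn ℝ (Icc a b) fun x => f (a + b - x) := by
  refine ⟨convex_Icc a b, fun x hx y hy s t hs ht hst => ?_⟩
  have hx' : a + b - x ∈ Icc a b := ⟨by linarith [hx.2], by linarith [hx.1]⟩
  have hy' : a + b - y ∈ Icc a b := ⟨by linarith [hy.2], by linarith [hy.1]⟩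
  convert hf.2 hx' hy' hs ht hst using 2
  simp only [smul_eq_mul]
  linear_combination -(a + b) * hst

theorem rpow_mul_rpow_of_holderConjugate {p q D u v : ℝ} (hpq : p.HolderConjugate q)
    (hD : 0 ≤ D) (hu : 0 ≤ u) (hv : 0 ≤ v) :
    (D ^ (p + 1) * u) ^ (1 / p) * (D ^ (q + 1) * v) ^ (1 / q)
      = D ^ 3 * u ^ (1 / p) * v ^ (1 / q) := by
  have hexp : (p + 1) * (1 / p) + (q + 1) * (1 / q) = 3 := by
    have := hpq.one_div_add_one_div
    field_simp [hpq.ne_zero, hpq.symm.ne_zero] at this ⊢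
    linarith
  rw [Real.mul_rpow (Real.rpow_nonneg hD _) hu, Real.mul_rpow (Real.rpow_nonneg hD _) hv,
    ← Real.rpow_mul hD, ← Real.rpow_mul hD]
  calc D ^ ((p + 1) * (1 / p)) * u ^ (1 / p) * (D ^ ((q + 1) * (1 / q)) * v ^ (1 / q))
      = D ^ ((p + 1) * (1 / p) + (q + 1) * (1 / q)) * u ^ (1 / p) * v ^ (1 / q) := by
        rw [Real.rpow_add' hD (by rw [hexp]; norm_num)]; ring
    _ = D ^ 3 * u ^ (1 / p) * v ^ (1 / q) := by rw [hexp]; norm_cast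

theorem two_pow_const_rpow_eq {p : ℝ} (hp : 0 < p) :
    ((2 ^ (p + 1) - 1) / (2 ^ (p + 1) * (p + 1))) ^ (1 / p)
      = 2 * ((2 ^ (p + 1) - 1) / (2 ^ (2 * p + 1) * (p + 1))) ^ (1 / p) := by
  have h2p : (0:ℝ) < 2 ^ p := by positivity
  have hnum : (0:ℝ) ≤ 2 ^ (p + 1) - 1 :=
    sub_nonneg.2 (Real.one_le_rpow (by norm_num) (by linarith))
  have hsplit : (2:ℝ) ^ (2 * p + 1) = 2 ^ p * 2 ^ (p + 1) := by
    rw [← Real.rpow_add (by norm_num)]; ring_nf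
  calc ((2 ^ (p + 1) - 1) / (2 ^ (p + 1) * (p + 1))) ^ (1 / p)
      = (2 ^ p * ((2 ^ (p + 1) - 1) / (2 ^ (2 * p + 1) * (p + 1)))) ^ (1 / p) := by
        rw [hsplit]; field_simp
    _ = (2 ^ p) ^ (1 / p) * ((2 ^ (p + 1) - 1) / (2 ^ (2 * p + 1) * (p + 1))) ^ (1 / p) :=
        Real.mul_rpow h2p.le (by positivity)
    _ = 2 * ((2 ^ (p + 1) - 1) / (2 ^ (2 * p + 1) * (p + 1))) ^ (1 / p) := by
        rw [← Real.rpow_mul (by norm_num), mul_one_div_cancel hp.ne', Real.rpow_one]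

theorem integral_rpow_comp_sub_left_half {a b p : ℝ} (hab : a ≤ b) (hp : -1 < p) :
    ∫ x in a..(a + b) / 2, (b - x) ^ p
      = (b - a) ^ (p + 1) * ((2 ^ (p + 1) - 1) / (2 ^ (p + 1) * (p + 1))) := by
  rw [intervalIntegral.integral_comp_sub_left (fun x => x ^ p), integral_rpow (Or.inl hp),
    show b - (a + b) / 2 = (b - a) / 2 by ring, Real.div_rpow (sub_nonneg.2 hab) zero_le_two]
  have : p + 1 ≠ 0 := by linarith
  field_simp

theorem integral_rpow_comp_sub_right_half {a b q : ℝ} (hab : a ≤ b) (hq : -1 < q) :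
    ∫ x in a..(a + b) / 2, (x - a) ^ (q + 1) = (b - a) ^ (q + 2) / (2 ^ (q + 2) * (q + 2)) := by
  rw [intervalIntegral.integral_comp_sub_right (fun x => x ^ (q + 1)),
    integral_rpow (Or.inl (by linarith)), sub_self, Real.zero_rpow (by linarith),
    show (a + b) / 2 - a = (b - a) / 2 by ring, Real.div_rpow (sub_nonneg.2 hab) zero_le_two,
    show q + 1 + 1 = q + 2 by ring]
  field_simp
  ring

theorem integral_rpow_comp_sub_right_mul_half {a b q : ℝ} (hab : a < b) :
    ∫ x in a..(a + b) / 2, (x - a) ^ q * (b - x)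
      = (b - a) ^ (q + 2) * ∫ u in (0:ℝ)..1 / 2, u ^ q * (1 - u) := by
  have hD : 0 < b - a := sub_pos.2 hab
  have h := intervalIntegral.integral_comp_mul_add (fun x => (x - a) ^ q * (b - x))
    (a := 0) (b := 1 / 2) hD.ne' a
  rw [mul_zero, zero_add, show (b - a) * (1 / 2) + a = (a + b) / 2 by ring, smul_eq_mul,
    eq_inv_mul_iff_mul_eq₀ hD.ne'] at h
  calc ∫ x in a..(a + b) / 2, (x - a) ^ q * (b - x)
      = (b - a) * ∫ u in (0:ℝ)..1 / 2, ((b - a) * u + a - a) ^ q * (b - ((b - a) * u + a)) :=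
        h.symm
    _ = (b - a) * ∫ u in (0:ℝ)..1 / 2, (b - a) ^ (q + 1) * (u ^ q * (1 - u)) := by
        congr 1
        refine intervalIntegral.integral_congr fun u hu => ?_
        rw [uIcc_of_le (by norm_num)] at hu
        rw [add_sub_cancel_right, Real.mul_rpow hD.le hu.1, Real.rpow_add_one hD.ne']
        ring
    _ = (b - a) ^ (q + 2) * ∫ u in (0:ℝ)..1 / 2, u ^ q * (1 - u) := by
        rw [intervalIntegral.integral_const_mul, show q + 2 = q + 1 + 1 by ring,
          Real.rpow_add_one hD.ne' (q + 1)]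
        ring

theorem integral_rpow_comp_sub_right_mul_chord_half {a b q A B : ℝ} (hab : a < b)
    (hq : 0 ≤ q) :
    ∫ x in a..(a + b) / 2, (x - a) ^ q * (((b - x) * A + (x - a) * B) / (b - a))
      = (b - a) ^ (q + 1) *
          (B / (2 ^ (q + 2) * (q + 2)) + (∫ u in (0:ℝ)..1 / 2, u ^ q * (1 - u)) * A) := by
  have hD : 0 < b - a := sub_pos.2 hab
  have hsplit : ∀ x ∈ uIcc a ((a + b) / 2),
      (x - a) ^ q * (((b - x) * A + (x - a) * B) / (b - a))
        = A / (b - a) * ((x - a) ^ q * (b - x)) + B / (b - a) * (x - a) ^ (q + 1) := by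
    intro x hx
    rw [uIcc_of_le (by linarith)] at hx
    rw [Real.rpow_add_one' (sub_nonneg.2 hx.1) (by linarith)]
    ring
  rw [intervalIntegral.integral_congr hsplit, intervalIntegral.integral_add,
    intervalIntegral.integral_const_mul, intervalIntegral.integral_const_mul,
    integral_rpow_comp_sub_right_mul_half hab,
    integral_rpow_comp_sub_right_half hab.le (by linarith),
    show q + 2 = q + 1 + 1 by ring, Real.rpow_add_one hD.ne' (q + 1)]
  · field_simp
    ring
  all_goals exact Continuous.intervalIntegrable (by fun_prop (disch := positivity)) _ _

theorem trapezoid_sub_average_eq_integral {f f' f'' : ℝ → ℝ} {a b : ℝ} (hab : a ≠ b)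
    (hf : ∀ x ∈ uIcc a b, HasDerivAt f (f' x) x)
    (hf' : ∀ x ∈ uIcc a b, HasDerivAt f' (f'' x) x)
    (hf'i : IntervalIntegrable f' volume a b) (hf''i : IntervalIntegrable f'' volume a b) :
    (f a + f b) / 2 - 1 / (b - a) * ∫ x in a..b, f x
      = 1 / (2 * (b - a)) * ∫ x in a..b, (x - a) * (b - x) * f'' x := by
  have hw : ∀ x ∈ uIcc a b, HasDerivAt (fun x => (x - a) * (b - x)) (a + b - 2 * x) x :=
    fun x _ => (((hasDerivAt_id' x).sub_const a).mul
      ((hasDerivAt_id' x).const_sub b)).congr_deriv (by ring)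
  have hw' : ∀ x ∈ uIcc a b, HasDerivAt (fun x => a + b - 2 * x) (-2) x :=
    fun x _ => (((hasDerivAt_id' x).const_mul 2).const_sub (a + b)).congr_deriv (by ring)
  have ibp₁ := intervalIntegral.integral_mul_deriv_eq_deriv_mul hw hf'
    ((continuous_const.sub (continuous_const.mul continuous_id)).intervalIntegrable a b) hf''i
  have ibp₂ := intervalIntegral.integral_mul_deriv_eq_deriv_mul hw' hf intervalIntegrable_const
    hf'i
  rw [intervalIntegral.integral_const_mul] at ibp₂
  rw [ibp₁, ibp₂]
  have : b - a ≠ 0 := sub_ne_zero.2 hab.symm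
  field_simp
  ring

theorem abs_integral_mul_le_left_half_add_reflect {g : ℝ → ℝ} {a b : ℝ} (hab : a ≤ b)
    (hg : IntervalIntegrable g volume a b) :
    |∫ x in a..b, (x - a) * (b - x) * g x|
      ≤ (∫ x in a..(a + b) / 2, (x - a) * (b - x) * |g x|)
        + ∫ x in a..(a + b) / 2, (x - a) * (b - x) * |g (a + b - x)| := by
  have habs : ∀ x ∈ uIcc a b, |(x - a) * (b - x) * g x| = (x - a) * (b - x) * |g x| := by
    intro x hx
    rw [uIcc_of_le hab] at hx
    rw [abs_mul, abs_of_nonneg (mul_nonneg (sub_nonneg.2 hx.1) (sub_nonneg.2 hx.2))]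
  have hint : IntervalIntegrable (fun x => (x - a) * (b - x) * |g x|) volume a b :=
    hg.abs.continuousOn_mul (by fun_prop)
  have hm : (a + b) / 2 ∈ uIcc a b := by
    rw [uIcc_of_le hab]
    constructor <;> linarith
  have hreflect := intervalIntegral.integral_comp_sub_left
    (fun x => (x - a) * (b - x) * |g x|) (a + b) (a := a) (b := (a + b) / 2)
  rw [show a + b - (a + b) / 2 = (a + b) / 2 by ring, add_sub_cancel_left] at hreflect
  calc |∫ x in a..b, (x - a) * (b - x) * g x|
      ≤ ∫ x in a..b, |(x - a) * (b - x) * g x| :=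
        intervalIntegral.abs_integral_le_integral_abs hab
    _ = ∫ x in a..b, (x - a) * (b - x) * |g x| := intervalIntegral.integral_congr habs
    _ = (∫ x in a..(a + b) / 2, (x - a) * (b - x) * |g x|)
          + ∫ x in (a + b) / 2..b, (x - a) * (b - x) * |g x| :=
        (intervalIntegral.integral_add_adjacent_intervals
          (hint.mono_set (uIcc_subset_uIcc left_mem_uIcc hm))
          (hint.mono_set (uIcc_subset_uIcc hm right_mem_uIcc))).symm
    _ = _ := by
        rw [← hreflect]
        congr 1
        exact intervalIntegral.integral_congr fun x _ => by ring

theorem integral_left_half_weight_mul_abs_le {g : ℝ → ℝ} {a b p q : ℝ} (hab : a < b)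
    (hpq : p.HolderConjugate q) (hg : IntervalIntegrable g volume a b)
    (hconv : ConvexOn ℝ (Icc a b) fun x => |g x| ^ q) :
    ∫ x in a..(a + b) / 2, (x - a) * (b - x) * |g x|
      ≤ (b - a) ^ 3 * ((2 ^ (p + 1) - 1) / (2 ^ (p + 1) * (p + 1))) ^ (1 / p) *
        (|g b| ^ q / (2 ^ (q + 2) * (q + 2))
          + (∫ u in (0:ℝ)..1 / 2, u ^ q * (1 - u)) * |g a| ^ q) ^ (1 / q) := by
  have ham : a ≤ (a + b) / 2 := by linarith
  have hmb : (a + b) / 2 < b := by linarith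
  set m := (a + b) / 2
  have hp := hpq.pos
  have hq := hpq.symm.pos
  set chord := fun x => (x - a) ^ q * (((b - x) * |g a| ^ q + (x - a) * |g b| ^ q) / (b - a))
  have hchord : ∀ x ∈ Ioc a m, ((x - a) * |g x|) ^ q ≤ chord x := by
    intro x hx
    rw [Real.mul_rpow (sub_nonneg.2 hx.1.le) (abs_nonneg _)]
    simp only [chord]
    refine mul_le_mul_of_nonneg_left ?_ (Real.rpow_nonneg (sub_nonneg.2 hx.1.le) _)
    rw [le_div_iff₀ (sub_pos.2 hab), mul_comm]
    exact hconv.secant_mono_aux1 (left_mem_Icc.2 hab.le) (right_mem_Icc.2 hab.le) hx.1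
      (hx.2.trans_lt hmb)
  have hchord_int : IntegrableOn chord (Ioc a m) :=
    (by fun_prop (disch := positivity) : Continuous chord).integrableOn_Ioc
  have hg_meas : AEStronglyMeasurable g (volume.restrict (Ioc a m)) :=
    (hg.1.mono_set (Ioc_subset_Ioc_right hmb.le)).aestronglyMeasurable
  have hG_meas : AEStronglyMeasurable (fun x => (x - a) * |g x|) (volume.restrict (Ioc a m)) :=
    (continuous_sub_right a).aestronglyMeasurable.mul
      (continuous_abs.comp_aestronglyMeasurable hg_meas)
  have hG0 : ∀ x ∈ Ioc a m, 0 ≤ (x - a) * |g x| :=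
    fun x hx => mul_nonneg (sub_nonneg.2 hx.1.le) (abs_nonneg _)
  have hGq_int : IntegrableOn (fun x => ((x - a) * |g x|) ^ q) (Ioc a m) :=
    hchord_int.mono' ((Real.continuous_rpow_const hq.le).comp_aestronglyMeasurable hG_meas) <|
      ae_restrict_of_forall_mem measurableSet_Ioc fun x hx => by
        rw [Real.norm_of_nonneg (Real.rpow_nonneg (hG0 x hx) _)]
        exact hchord x hx
  have hF0 : ∀ x ∈ Ioc a m, 0 ≤ b - x := fun x hx => sub_nonneg.2 (hx.2.trans hmb.le)
  have holder := integral_mul_le_Lp_mul_Lq_of_integrable_rpow hpq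
    (continuous_sub_left b).aestronglyMeasurable hG_meas
    (ae_restrict_of_forall_mem measurableSet_Ioc hF0)
    (ae_restrict_of_forall_mem measurableSet_Ioc hG0)
    ((by fun_prop (disch := positivity) : Continuous fun x => (b - x) ^ p).integrableOn_Ioc)
    hGq_int
  calc ∫ x in a..m, (x - a) * (b - x) * |g x|
      = ∫ x in Ioc a m, (b - x) * ((x - a) * |g x|) := by
        rw [intervalIntegral.integral_of_le ham]
        exact setIntegral_congr_fun measurableSet_Ioc fun x _ => by ring
    _ ≤ (∫ x in Ioc a m, (b - x) ^ p) ^ (1 / p) *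
          (∫ x in Ioc a m, ((x - a) * |g x|) ^ q) ^ (1 / q) := holder
    _ ≤ (∫ x in Ioc a m, (b - x) ^ p) ^ (1 / p) * (∫ x in Ioc a m, chord x) ^ (1 / q) := by
        refine mul_le_mul_of_nonneg_left (Real.rpow_le_rpow ?_ ?_ (one_div_nonneg.2 hq.le))
          (Real.rpow_nonneg ?_ _)
        · exact setIntegral_nonneg measurableSet_Ioc fun x hx => Real.rpow_nonneg (hG0 x hx) _
        · exact setIntegral_mono_on hGq_int hchord_int measurableSet_Ioc hchord
        · exact setIntegral_nonneg measurableSet_Ioc fun x hx => Real.rpow_nonneg (hF0 x hx) _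
    _ = ((b - a) ^ (p + 1) * ((2 ^ (p + 1) - 1) / (2 ^ (p + 1) * (p + 1)))) ^ (1 / p) *
        ((b - a) ^ (q + 1) * (|g b| ^ q / (2 ^ (q + 2) * (q + 2))
          + (∫ u in (0:ℝ)..1 / 2, u ^ q * (1 - u)) * |g a| ^ q)) ^ (1 / q) := by
        rw [← intervalIntegral.integral_of_le ham, ← intervalIntegral.integral_of_le ham,
          integral_rpow_comp_sub_left_half hab.le (by linarith),
          integral_rpow_comp_sub_right_mul_chord_half hab hq.le]
    _ = _ := by
        refine rpow_mul_rpow_of_holderConjugate hpq (sub_pos.2 hab).le ?_ ?_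
        · exact div_nonneg (sub_nonneg.2 (Real.one_le_rpow one_le_two (by linarith)))
            (by positivity)
        · have hβ : 0 ≤ ∫ u in (0:ℝ)..1 / 2, u ^ q * (1 - u) :=
            intervalIntegral.integral_nonneg (by norm_num) fun u hu =>
              mul_nonneg (Real.rpow_nonneg hu.1 _) (by linarith [hu.2])
          positivity

theorem stmt_15_general (f f' f'' : ℝ → ℝ) (I : Set ℝ) (a b : ℝ) (hab : a < b)
    (hsub : Set.Icc a b ⊆ I)
    (hdf : ∀ x ∈ I, HasDerivAt f (f' x) x)
    (hdf2 : ∀ x ∈ I, HasDerivAt f' (f'' x) x)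
    (hf1i : IntervalIntegrable f' MeasureTheory.volume a b)
    (hf2i : IntervalIntegrable f'' MeasureTheory.volume a b)
    (p q : ℝ) (hp : 1 < p) (hpq : 1/p + 1/q = 1)
    (hconv : ConvexOn ℝ (Set.Icc a b) (fun x => |f'' x| ^ q)) :
    |(f a + f b)/2 - (1/(b-a)) * ∫ x in a..b, f x|
    ≤ (b-a)^2 * ((2 ^ (p+1) - 1) / (2 ^ (2*p+1) * (p+1))) ^ (1/p) *
      (((|f'' b| ^ q) / (2 ^ (q+2) * (q+2))
        + (∫ u in (0:ℝ)..(1/2), u ^ q * (1-u)) * |f'' a| ^ q) ^ (1/q)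
      + ((∫ u in (0:ℝ)..(1/2), u ^ q * (1-u)) * |f'' b| ^ q
        + (|f'' a| ^ q) / (2 ^ (q+2) * (q+2))) ^ (1/q)) := by
  have hpq' : p.HolderConjugate q :=
    Real.holderConjugate_iff.2 ⟨hp, by simpa only [one_div] using hpq⟩
  have hI : uIcc a b ⊆ I := uIcc_of_le hab.le ▸ hsub
  have hleft := integral_left_half_weight_mul_abs_le hab hpq' hf2i hconv
  have hright := integral_left_half_weight_mul_abs_le hab hpq'
    (by simpa using (hf2i.comp_sub_left (a + b)).symm) hconv.comp_reflect_Icc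
  simp only [add_sub_cancel_left, add_sub_cancel_right] at hright
  rw [two_pow_const_rpow_eq hpq'.pos, add_comm (|f'' a| ^ q / _)] at hright
  rw [two_pow_const_rpow_eq hpq'.pos] at hleft
  have hsplit := (abs_integral_mul_le_left_half_add_reflect hab.le hf2i).trans
    (add_le_add hleft hright)
  rw [trapezoid_sub_average_eq_integral hab.ne (fun x hx => hdf x (hI hx))
    (fun x hx => hdf2 x (hI hx)) hf1i hf2i, abs_mul, abs_of_pos (by simp [hab])]
  refine (mul_le_mul_of_nonneg_left hsplit (by simp [hab.le])).trans_eq ?_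
  field_simp

theorem stmt_15 (f f' f'' : ℝ → ℝ) (I : Set ℝ) (hI : IsOpen I) (a b : ℝ) (hab : a < b)
    (hsub : Set.Icc a b ⊆ I)
    (hdf : ∀ x ∈ I, HasDerivAt f (f' x) x)
    (hdf2 : ∀ x ∈ I, HasDerivAt f' (f'' x) x)
    (hfi : IntervalIntegrable f MeasureTheory.volume a b)
    (hf1i : IntervalIntegrable f' MeasureTheory.volume a b)
    (hf2i : IntervalIntegrable f'' MeasureTheory.volume a b)
    (p q : ℝ) (hp : 1 < p) (hq : 1 < q) (hpq : 1/p + 1/q = 1)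
    (hconv : ConvexOn ℝ (Set.Icc a b) (fun x => |f'' x| ^ q)) :
    |(f a + f b)/2 - (1/(b-a)) * ∫ x in a..b, f x|
    ≤ (b-a)^2 * ((2 ^ (p+1) - 1) / (2 ^ (2*p+1) * (p+1))) ^ (1/p) *
      (((|f'' b| ^ q) / (2 ^ (q+2) * (q+2))
        + (∫ u in (0:ℝ)..(1/2), u ^ q * (1-u)) * |f'' a| ^ q) ^ (1/q)
      + ((∫ u in (0:ℝ)..(1/2), u ^ q * (1-u)) * |f'' b| ^ q
        + (|f'' a| ^ q) / (2 ^ (q+2) * (q+2))) ^ (1/q)) :=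
  stmt_15_general f f' f'' I a b hab hsub hdf hdf2 hf1i hf2i p q hp hpq hconv
end

section
/- Let f : ℝ → ℝ be twice differentiable on an open interval containing [a,b], a < b, with f, f', f'' integrable, and let p, q > 1 with 1/p + 1/q = 1. If |f''|^q is convex on [a,b], then |(1/6)[f(a) + 4f((a+b)/2) + f(b)] - (1/(b-a))∫_a^b f(x)dx| ≤ (b-a)² ((2^{p+1}-1)/(2^{2p+1}·3^{p+1}(p+1)))^{1/p} { [ |f''(b)|^q/(2^{q+2}(q+2)) + B(1/2; q+1,2)|f''(a)|^q ]^{1/q} + [ B(1/2; q+1,2)|f''(b)|^q + |f''(a)|^q/(2^{q+2}(q+2)) ]^{1/q} }. -/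
/-!
Two integrations by parts against the Peano kernel `K x = (x - a) / 6 - (x - a)² / (2 (b - a))`
on `[a, m]`, `m = (a + b) / 2`, and against its reflection `x ↦ K (a + b - x)` on `[m, b]`, write
the Simpson error as `∫ x in a..m, K x * (f'' x + f'' (a + b - x))`. Convexity of `|f''|^q` gives
`|f'' x|^q + |f'' (a + b - x)|^q ≤ |f'' a|^q + |f'' b|^q`, so by the power mean inequality the
second factor is at most `2 ((|f'' a|^q + |f'' b|^q) / 2)^(1/q)`, while `∫ x in a..m, |K x|` is
`(b - a)² / 162`.

This bound is below the stated one: each bracket dominates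
`(|f'' a|^q + |f'' b|^q) / (2^(q+2) (q+2))` because `B(1/2; q+1, 2) ≥ ∫ u in 0..1/2, u^(q+1)`,
and the comparison of the remaining constants comes from Young's inequality
`(4 (p+1))^(1/p) (2 (q+2))^(1/q) ≤ 4 (p+1) / p + 2 (q+2) / q = 10`.
-/

open MeasureTheory Set intervalIntegral

theorem add_div_two_le_rpow_mean {u v q : ℝ} (hu : 0 ≤ u) (hv : 0 ≤ v) (hq : 1 ≤ q) :
    (u + v) / 2 ≤ ((u ^ q + v ^ q) / 2) ^ (1 / q) := by
  rw [one_div, Real.le_rpow_inv_iff_of_pos (by positivity) (by positivity) (by linarith)]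
  have h := (convexOn_rpow hq).2 (mem_Ici.2 hu) (mem_Ici.2 hv) (by norm_num : (0 : ℝ) ≤ 1 / 2)
    (by norm_num : (0 : ℝ) ≤ 1 / 2) (by norm_num)
  simp only [smul_eq_mul] at h
  calc ((u + v) / 2) ^ q = (1 / 2 * u + 1 / 2 * v) ^ q := by ring_nf
    _ ≤ 1 / 2 * u ^ q + 1 / 2 * v ^ q := h
    _ = (u ^ q + v ^ q) / 2 := by ring

theorem ConvexOn.add_apply_reflect_le {g : ℝ → ℝ} {a b z : ℝ} (hg : ConvexOn ℝ (Icc a b) g)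
    (hz : z ∈ Icc a b) : g z + g (a + b - z) ≤ g a + g b := by
  have hab : a ≤ b := hz.1.trans hz.2
  rw [← segment_eq_Icc hab] at hz
  obtain ⟨θ, φ, hθ, hφ, hθφ, rfl⟩ := hz
  have h₁ := hg.2 (left_mem_Icc.2 hab) (right_mem_Icc.2 hab) hθ hφ hθφ
  have h₂ := hg.2 (left_mem_Icc.2 hab) (right_mem_Icc.2 hab) hφ hθ (by linarith)
  have hreflect : a + b - (θ • a + φ • b) = φ • a + θ • b := by
    simp only [smul_eq_mul]
    linear_combination (-(a + b)) * hθφ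
  rw [hreflect]
  simp only [smul_eq_mul] at h₁ h₂ ⊢
  linear_combination h₁ + h₂ + (g a + g b) * hθφ

theorem ConvexOn.abs_add_apply_reflect_le {g : ℝ → ℝ} {a b q x : ℝ} (hq : 1 ≤ q)
    (hg : ConvexOn ℝ (Icc a b) fun x => |g x| ^ q) (hx : x ∈ Icc a b) :
    |g x + g (a + b - x)| ≤ 2 * ((|g a| ^ q + |g b| ^ q) / 2) ^ (1 / q) :=
  calc |g x + g (a + b - x)| ≤ |g x| + |g (a + b - x)| := abs_add_le _ _
    _ ≤ 2 * ((|g x| ^ q + |g (a + b - x)| ^ q) / 2) ^ (1 / q) := by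
      linarith [add_div_two_le_rpow_mean (abs_nonneg (g x)) (abs_nonneg (g (a + b - x))) hq]
    _ ≤ 2 * ((|g a| ^ q + |g b| ^ q) / 2) ^ (1 / q) := by
      gcongr 2 * (?_ / 2) ^ _
      exact hg.add_apply_reflect_le hx

theorem le_integral_rpow_mul_one_sub {q : ℝ} (hq : -1 < q) :
    1 / (2 ^ (q + 2) * (q + 2)) ≤ ∫ u in (0 : ℝ)..1 / 2, u ^ q * (1 - u) := by
  have hmono : ∫ u in (0 : ℝ)..1 / 2, u ^ (q + 1) ≤ ∫ u in (0 : ℝ)..1 / 2, u ^ q * (1 - u) := by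
    refine integral_mono_on (by norm_num) (intervalIntegrable_rpow' (by linarith))
      ((intervalIntegrable_rpow' hq).mul_continuousOn (by fun_prop)) fun u hu => ?_
    rw [Real.rpow_add_one' hu.1 (by linarith)]
    exact mul_le_mul_of_nonneg_left (by linarith [hu.2]) (by positivity [hu.1])
  rwa [integral_rpow (Or.inl (by linarith)), Real.zero_rpow (by linarith), sub_zero,
    Real.div_rpow (by norm_num) (by norm_num), Real.one_rpow, div_div, add_assoc,
    one_add_one_eq_two] at hmono

theorem one_div_six_mul_rpow_le {p : ℝ} (hp : 1 ≤ p) :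
    1 / (6 * (4 * (p + 1)) ^ (1 / p))
      ≤ ((2 ^ (p + 1) - 1) / (2 ^ (2 * p + 1) * 3 ^ (p + 1) * (p + 1))) ^ (1 / p) := by
  have hp0 : 0 < p := by linarith
  have hp1 : 0 < 4 * (p + 1) := by linarith
  have h2p : 2 ≤ (2 : ℝ) ^ p := by
    simpa using Real.rpow_le_rpow_of_exponent_le (by norm_num : (1 : ℝ) ≤ 2) hp
  have hlhs : 1 / (6 * (4 * (p + 1)) ^ (1 / p))
      = (1 / (2 ^ p * 3 ^ p * (4 * (p + 1)))) ^ (1 / p) := by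
    rw [← Real.mul_rpow (by norm_num) (by norm_num), Real.div_rpow zero_le_one (by positivity),
      Real.one_rpow, Real.mul_rpow (by positivity) hp1.le, ← Real.rpow_mul (by norm_num),
      mul_one_div_cancel hp0.ne', Real.rpow_one]
    norm_num
  rw [hlhs]
  refine Real.rpow_le_rpow (by positivity) ?_ (by positivity)
  have h2p1 : (2 : ℝ) ^ (p + 1) = 2 ^ p * 2 := Real.rpow_add_one (by norm_num) p
  have h22p1 : (2 : ℝ) ^ (2 * p + 1) = 2 ^ p * 2 ^ p * 2 := by
    rw [two_mul, Real.rpow_add_one (by norm_num), Real.rpow_add two_pos]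
  have h3p1 : (3 : ℝ) ^ (p + 1) = 3 ^ p * 3 := Real.rpow_add_one (by norm_num) p
  rw [h2p1, h22p1, h3p1, div_le_div_iff₀ (by positivity) (by positivity)]
  have : 0 < (p + 1) * 3 ^ p * 2 ^ p := by positivity
  nlinarith

theorem Real.HolderConjugate.rpow_mul_rpow_le_ten {p q : ℝ} (hpq : p.HolderConjugate q) :
    (4 * (p + 1)) ^ (1 / p) * (2 * (q + 2)) ^ (1 / q) ≤ 10 := by
  have hp := hpq.pos
  have hq := hpq.symm.pos
  calc (4 * (p + 1)) ^ (1 / p) * (2 * (q + 2)) ^ (1 / q)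
      ≤ 1 / p * (4 * (p + 1)) + 1 / q * (2 * (q + 2)) :=
        Real.geom_mean_le_arith_mean2_weighted hpq.one_div_nonneg hpq.symm.one_div_nonneg
          (by positivity) (by positivity) (by simpa using hpq.one_div_add_one_div)
    _ = 6 + 4 * (1 / p + 1 / q) := by field_simp; ring
    _ = 10 := by rw [hpq.one_div_add_one_div]; norm_num

theorem Real.HolderConjugate.rpow_half_le {p q S : ℝ} (hpq : p.HolderConjugate q) (hS : 0 ≤ S) :
    (S / 2) ^ (1 / q)
      ≤ 162 * ((2 ^ (p + 1) - 1) / (2 ^ (2 * p + 1) * 3 ^ (p + 1) * (p + 1))) ^ (1 / p)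
        * (S / (2 ^ (q + 2) * (q + 2))) ^ (1 / q) := by
  have hq := hpq.symm.pos
  have hsplit : S / 2 = 2 ^ q * (2 * (q + 2)) * (S / (2 ^ (q + 2) * (q + 2))) := by
    rw [Real.rpow_add two_pos]
    field_simp
    norm_num
  have hconst : 2 * (2 * (q + 2)) ^ (1 / q)
      ≤ 162 * ((2 ^ (p + 1) - 1) / (2 ^ (2 * p + 1) * 3 ^ (p + 1) * (p + 1))) ^ (1 / p) := by
    have hyoung := hpq.rpow_mul_rpow_le_ten
    have hC := one_div_six_mul_rpow_le hpq.lt.le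
    have hY : 0 < (4 * (p + 1)) ^ (1 / p) := by have := hpq.pos; positivity
    rw [div_le_iff₀ (by positivity)] at hC
    nlinarith
  rw [hsplit, Real.mul_rpow (by positivity) (by positivity),
    Real.mul_rpow (by positivity) (by positivity), ← Real.rpow_mul zero_le_two,
    mul_one_div_cancel hq.ne', Real.rpow_one]
  gcongr

theorem integral_mul_deriv_deriv_eq {u u' u'' v v' v'' : ℝ → ℝ} {s t : ℝ}
    (hu : ∀ x ∈ uIcc s t, HasDerivAt u (u' x) x) (hu' : ∀ x ∈ uIcc s t, HasDerivAt u' (u'' x) x)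
    (hv : ∀ x ∈ uIcc s t, HasDerivAt v (v' x) x) (hv' : ∀ x ∈ uIcc s t, HasDerivAt v' (v'' x) x)
    (hu'i : IntervalIntegrable u' volume s t) (hu''i : IntervalIntegrable u'' volume s t)
    (hv'i : IntervalIntegrable v' volume s t) (hv''i : IntervalIntegrable v'' volume s t) :
    ∫ x in s..t, u x * v'' x
      = u t * v' t - u s * v' s - (u' t * v t - u' s * v s) + ∫ x in s..t, u'' x * v x := by
  rw [integral_mul_deriv_eq_deriv_mul hu hv' hu'i hv''i,
    integral_mul_deriv_eq_deriv_mul hu' hv hu''i hv'i]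
  ring

noncomputable def simpsonKernel (a b x : ℝ) : ℝ := (x - a) / 6 - (x - a) ^ 2 / (2 * (b - a))

theorem continuous_simpsonKernel (a b : ℝ) : Continuous (simpsonKernel a b) := by
  unfold simpsonKernel
  fun_prop

theorem hasDerivAt_simpsonKernel (a b x : ℝ) :
    HasDerivAt (simpsonKernel a b) (1 / 6 - (x - a) / (b - a)) x := by
  have hx := (hasDerivAt_id' x).sub_const a
  exact ((hx.div_const 6).sub ((hx.pow 2).div_const (2 * (b - a)))).congr_deriv
    (by norm_num [mul_div_mul_left])

theorem integral_simpsonKernel_mul {f f' f'' : ℝ → ℝ} {a b : ℝ} (hab : a ≠ b)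
    (hf : ∀ x ∈ uIcc a ((a + b) / 2), HasDerivAt f (f' x) x)
    (hf' : ∀ x ∈ uIcc a ((a + b) / 2), HasDerivAt f' (f'' x) x)
    (hf'i : IntervalIntegrable f' volume a ((a + b) / 2))
    (hf''i : IntervalIntegrable f'' volume a ((a + b) / 2)) :
    ∫ x in a..(a + b) / 2, simpsonKernel a b x * f'' x
      = f a / 6 + f ((a + b) / 2) / 3 - (b - a) / 24 * f' ((a + b) / 2)
        - (∫ x in a..(a + b) / 2, f x) / (b - a) := by
  have hK' : ∀ x, HasDerivAt (fun x => 1 / 6 - (x - a) / (b - a)) (-1 / (b - a)) x := fun x =>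
    ((hasDerivAt_const x (1 / 6 : ℝ)).sub
      (((hasDerivAt_id' x).sub_const a).div_const (b - a))).congr_deriv (by ring)
  rw [integral_mul_deriv_deriv_eq (fun x _ => hasDerivAt_simpsonKernel a b x) (fun x _ => hK' x)
    hf hf' ((by fun_prop : Continuous fun x => 1 / 6 - (x - a) / (b - a)).intervalIntegrable _ _)
    intervalIntegrable_const hf'i hf''i, intervalIntegral.integral_const_mul]
  have hba : b - a ≠ 0 := sub_ne_zero.2 hab.symm
  simp only [simpsonKernel]
  field_simp
  ring

theorem simpson_sub_integral_eq {f f' f'' : ℝ → ℝ} {a b : ℝ} (hab : a < b)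
    (hf : ∀ x ∈ Icc a b, HasDerivAt f (f' x) x) (hf' : ∀ x ∈ Icc a b, HasDerivAt f' (f'' x) x)
    (hfi : IntervalIntegrable f volume a b) (hf'i : IntervalIntegrable f' volume a b)
    (hf''i : IntervalIntegrable f'' volume a b) :
    1 / 6 * (f a + 4 * f ((a + b) / 2) + f b) - 1 / (b - a) * ∫ x in a..b, f x
      = ∫ x in a..(a + b) / 2, simpsonKernel a b x * (f'' x + f'' (a + b - x)) := by
  have hm : (a + b) / 2 ∈ uIcc a b := by rw [uIcc_of_le hab.le]; constructor <;> linarith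
  have hsub : uIcc a ((a + b) / 2) ⊆ uIcc a b := uIcc_subset_uIcc_left hm
  have hmem : ∀ x ∈ uIcc a ((a + b) / 2), x ∈ Icc a b := fun x hx => by
    rw [← uIcc_of_le hab.le]; exact hsub hx
  have hmem' : ∀ x ∈ uIcc a ((a + b) / 2), a + b - x ∈ Icc a b := fun x hx => by
    have := hmem x hx; constructor <;> linarith [this.1, this.2]
  have hreflect {g : ℝ → ℝ} (hg : IntervalIntegrable g volume a b) :
      IntervalIntegrable (fun x => g (a + b - x)) volume a ((a + b) / 2) :=
    (by simpa using (hg.comp_sub_left (a + b)).symm : IntervalIntegrable _ volume a b).mono_set hsub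
  have hleft := integral_simpsonKernel_mul hab.ne (fun x hx => hf x (hmem x hx))
    (fun x hx => hf' x (hmem x hx)) (hf'i.mono_set hsub) (hf''i.mono_set hsub)
  have hright := integral_simpsonKernel_mul (f := fun x => f (a + b - x))
    (f' := fun x => -f' (a + b - x)) (f'' := fun x => f'' (a + b - x)) hab.ne
    (fun x hx => (hf _ (hmem' x hx)).comp_const_sub (a + b) x)
    (fun x hx => ((hf' _ (hmem' x hx)).comp_const_sub (a + b) x).neg.congr_deriv (neg_neg _))
    (hreflect hf'i).neg (hreflect hf''i)
  have hK := (continuous_simpsonKernel a b).continuousOn (s := uIcc a ((a + b) / 2))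
  have hmid : a + b - (a + b) / 2 = (a + b) / 2 := by ring
  simp only [mul_add]
  rw [integral_add ((hf''i.mono_set hsub).continuousOn_mul hK)
    ((hreflect hf''i).continuousOn_mul hK), hleft, hright, integral_comp_sub_left, hmid,
    ← integral_add_adjacent_intervals (hfi.mono_set hsub)
      (hfi.mono_set (uIcc_subset_uIcc_right hm))]
  simp only [add_sub_cancel_left]
  have hba : b - a ≠ 0 := sub_ne_zero.2 hab.ne'
  field_simp
  ring

theorem integral_abs_simpsonKernel {a b : ℝ} (hab : a < b) :
    ∫ x in a..(a + b) / 2, |simpsonKernel a b x| = (b - a) ^ 2 / 162 := by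
  have hba : 0 < b - a := sub_pos.2 hab
  have hK : ∀ x, simpsonKernel a b x = (x - a) * (b - a - 3 * (x - a)) / (6 * (b - a)) := by
    intro x; unfold simpsonKernel; field_simp; ring
  have hF : ∀ x, HasDerivAt (fun x => (x - a) ^ 2 / 12 - (x - a) ^ 3 / (6 * (b - a)))
      (simpsonKernel a b x) x := fun x => by
    have hx := (hasDerivAt_id' x).sub_const a
    exact ((hx.pow 2).div_const 12).sub ((hx.pow 3).div_const _) |>.congr_deriv
      (by rw [hK]; field_simp; ring)
  have hKi : ∀ s t, IntervalIntegrable (simpsonKernel a b) volume s t :=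
    (continuous_simpsonKernel a b).intervalIntegrable
  have hKi' : ∀ s t, IntervalIntegrable (fun x => |simpsonKernel a b x|) volume s t :=
    (continuous_simpsonKernel a b).abs.intervalIntegrable
  set c := (2 * a + b) / 3 with hc
  have hpos : ∫ x in a..c, |simpsonKernel a b x| = ∫ x in a..c, simpsonKernel a b x :=
    integral_congr fun x hx => by
      rw [uIcc_of_le (by linarith), hc] at hx
      refine abs_of_nonneg ?_
      rw [hK]
      exact div_nonneg (mul_nonneg (by linarith [hx.1]) (by linarith [hx.2])) (by positivity)
  have hneg : ∫ x in c..(a + b) / 2, |simpsonKernel a b x|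
      = ∫ x in c..(a + b) / 2, -simpsonKernel a b x :=
    integral_congr fun x hx => by
      rw [uIcc_of_le (by linarith), hc] at hx
      refine abs_of_nonpos ?_
      rw [hK]
      exact div_nonpos_of_nonpos_of_nonneg
        (mul_nonpos_of_nonneg_of_nonpos (by linarith [hx.1]) (by linarith [hx.1])) (by positivity)
  rw [← integral_add_adjacent_intervals (hKi' a c) (hKi' c _), hpos, hneg,
    intervalIntegral.integral_neg, integral_eq_sub_of_hasDerivAt (fun x _ => hF x) (hKi _ _),
    integral_eq_sub_of_hasDerivAt (fun x _ => hF x) (hKi _ _), hc]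
  field_simp
  ring

theorem abs_integral_simpsonKernel_mul_le {g : ℝ → ℝ} {a b M : ℝ} (hab : a < b)
    (hg : ∀ x ∈ Icc a ((a + b) / 2), |g x| ≤ M) :
    |∫ x in a..(a + b) / 2, simpsonKernel a b x * g x| ≤ (b - a) ^ 2 / 162 * M := by
  rw [← integral_abs_simpsonKernel hab, ← intervalIntegral.integral_mul_const, ← Real.norm_eq_abs]
  refine norm_integral_le_of_norm_le (by linarith) (ae_of_all _ fun x hx => ?_)
    (((continuous_simpsonKernel a b).abs.intervalIntegrable a ((a + b) / 2)).mul_const M)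
  rw [Real.norm_eq_abs, abs_mul]
  exact mul_le_mul_of_nonneg_left (hg x ⟨hx.1.le, hx.2⟩) (abs_nonneg _)

theorem stmt_16_general (f f' f'' : ℝ → ℝ) (I : Set ℝ) (a b : ℝ) (hab : a < b)
    (hsub : Set.Icc a b ⊆ I)
    (hdf : ∀ x ∈ I, HasDerivAt f (f' x) x)
    (hdf2 : ∀ x ∈ I, HasDerivAt f' (f'' x) x)
    (hfi : IntervalIntegrable f MeasureTheory.volume a b)
    (hf1i : IntervalIntegrable f' MeasureTheory.volume a b)
    (hf2i : IntervalIntegrable f'' MeasureTheory.volume a b)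
    (p q : ℝ) (hp : 1 < p) (hq : 1 < q) (hpq : 1/p + 1/q = 1)
    (hconv : ConvexOn ℝ (Set.Icc a b) (fun x => |f'' x| ^ q)) :
    |(1/6) * (f a + 4 * f ((a+b)/2) + f b) - (1/(b-a)) * ∫ x in a..b, f x|
    ≤ (b-a)^2 * ((2 ^ (p+1) - 1) / (2 ^ (2*p+1) * 3 ^ (p+1) * (p+1))) ^ (1/p) *
      (((|f'' b| ^ q) / (2 ^ (q+2) * (q+2))
        + (∫ u in (0:ℝ)..(1/2), u ^ q * (1-u)) * |f'' a| ^ q) ^ (1/q)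
      + ((∫ u in (0:ℝ)..(1/2), u ^ q * (1-u)) * |f'' b| ^ q
        + (|f'' a| ^ q) / (2 ^ (q+2) * (q+2))) ^ (1/q)) := by
  have hpq' : p.HolderConjugate q :=
    Real.holderConjugate_iff.2 ⟨hp, by simpa only [one_div] using hpq⟩
  set C := ((2 ^ (p+1) - 1) / (2 ^ (2*p+1) * 3 ^ (p+1) * (p+1))) ^ (1/p)
  set β := ∫ u in (0:ℝ)..(1/2), u ^ q * (1-u)
  set S := |f'' a| ^ q + |f'' b| ^ q
  have hC : 0 ≤ C := le_trans (by positivity) (one_div_six_mul_rpow_le hp.le)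
  have hβa : 1 / (2 ^ (q + 2) * (q + 2)) * |f'' a| ^ q ≤ β * |f'' a| ^ q :=
    mul_le_mul_of_nonneg_right (le_integral_rpow_mul_one_sub (by linarith)) (by positivity)
  have hβb : 1 / (2 ^ (q + 2) * (q + 2)) * |f'' b| ^ q ≤ β * |f'' b| ^ q :=
    mul_le_mul_of_nonneg_right (le_integral_rpow_mul_one_sub (by linarith)) (by positivity)
  rw [simpson_sub_integral_eq hab (fun x hx => hdf x (hsub hx)) (fun x hx => hdf2 x (hsub hx))
    hfi hf1i hf2i]
  calc _ ≤ (b - a) ^ 2 / 162 * (2 * (S / 2) ^ (1 / q)) :=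
        abs_integral_simpsonKernel_mul_le hab fun x hx =>
          hconv.abs_add_apply_reflect_le hq.le ⟨hx.1, by linarith [hx.2]⟩
    _ ≤ (b - a) ^ 2 / 162 * (2 * (162 * C * (S / (2 ^ (q + 2) * (q + 2))) ^ (1 / q))) := by
      gcongr
      exact hpq'.rpow_half_le (by positivity)
    _ = (b - a) ^ 2 * C * ((S / (2 ^ (q + 2) * (q + 2))) ^ (1 / q)
        + (S / (2 ^ (q + 2) * (q + 2))) ^ (1 / q)) := by ring
    _ ≤ _ := by
      gcongr
      · linarith [show S / (2 ^ (q + 2) * (q + 2)) = 1 / (2 ^ (q + 2) * (q + 2)) * |f'' a| ^ q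
          + |f'' b| ^ q / (2 ^ (q + 2) * (q + 2)) by ring]
      · linarith [show S / (2 ^ (q + 2) * (q + 2)) = 1 / (2 ^ (q + 2) * (q + 2)) * |f'' b| ^ q
          + |f'' a| ^ q / (2 ^ (q + 2) * (q + 2)) by ring]

theorem stmt_16 (f f' f'' : ℝ → ℝ) (I : Set ℝ) (hI : IsOpen I) (a b : ℝ) (hab : a < b)
    (hsub : Set.Icc a b ⊆ I)
    (hdf : ∀ x ∈ I, HasDerivAt f (f' x) x)
    (hdf2 : ∀ x ∈ I, HasDerivAt f' (f'' x) x)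
    (hfi : IntervalIntegrable f MeasureTheory.volume a b)
    (hf1i : IntervalIntegrable f' MeasureTheory.volume a b)
    (hf2i : IntervalIntegrable f'' MeasureTheory.volume a b)
    (p q : ℝ) (hp : 1 < p) (hq : 1 < q) (hpq : 1/p + 1/q = 1)
    (hconv : ConvexOn ℝ (Set.Icc a b) (fun x => |f'' x| ^ q)) :
    |(1/6) * (f a + 4 * f ((a+b)/2) + f b) - (1/(b-a)) * ∫ x in a..b, f x|
    ≤ (b-a)^2 * ((2 ^ (p+1) - 1) / (2 ^ (2*p+1) * 3 ^ (p+1) * (p+1))) ^ (1/p) *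
      (((|f'' b| ^ q) / (2 ^ (q+2) * (q+2))
        + (∫ u in (0:ℝ)..(1/2), u ^ q * (1-u)) * |f'' a| ^ q) ^ (1/q)
      + ((∫ u in (0:ℝ)..(1/2), u ^ q * (1-u)) * |f'' b| ^ q
        + (|f'' a| ^ q) / (2 ^ (q+2) * (q+2))) ^ (1/q)) :=
  stmt_16_general f f' f'' I a b hab hsub hdf hdf2 hfi hf1i hf2i p q hp hq hpq hconv
end
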